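/- arXiv:2110.13122 — 5 statements merged into one kernel-verified Lean document; each statement's English description precedes it below -/
import Mathlib

section
/- If X is an extremally disconnected Hausdorff space, then c(X) ≤ wL(X)·t(X), where c(X) is the cellularity, wL(X) the weak Lindelöf degree, and t(X) the tightness of X. -/
open Cardinal Set

universe u

section Defs
variable (X : Type u) [TopologicalSpace X]

/-- An open cover of the whole space. -/
def IsOpenCover (𝒰 : Set (Set X)) : Prop := (∀ U ∈ 𝒰, IsOpen U) ∧ ⋃₀ 𝒰 = Set.univ

/-- The cellularity: supremum of cardinalities of pairwise disjoint families of nonempty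
open sets, plus `ℵ₀`. -/
noncomputable def cellularity : Cardinal.{u} :=
  max ℵ₀ (⨆ 𝒰 : {𝒰 : Set (Set X) // (∀ U ∈ 𝒰, IsOpen U ∧ U.Nonempty) ∧
    𝒰.PairwiseDisjoint id}, #𝒰.1)

/-- The weak Lindelöf degree. -/
noncomputable def wLdeg : Cardinal.{u} :=
  sInf {κ | ℵ₀ ≤ κ ∧ ∀ 𝒰 : Set (Set X), IsOpenCover X 𝒰 →
    ∃ 𝒱 ⊆ 𝒰, #𝒱 ≤ κ ∧ Dense (⋃₀ 𝒱)}

/-- The tightness. -/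
noncomputable def tightness : Cardinal.{u} :=
  sInf {κ | ℵ₀ ≤ κ ∧ ∀ (A : Set X) (x : X), x ∈ closure A →
    ∃ B ⊆ A, #B ≤ κ ∧ x ∈ closure B}

/-- The π-character. -/
noncomputable def piCharacter : Cardinal.{u} :=
  sInf {κ | ℵ₀ ≤ κ ∧ ∀ x : X, ∃ 𝒬 : Set (Set X), #𝒬 ≤ κ ∧
    (∀ P ∈ 𝒬, IsOpen P ∧ P.Nonempty) ∧
    ∀ U : Set X, IsOpen U → x ∈ U → ∃ P ∈ 𝒬, P ⊆ U}

/-- The pseudocharacter. -/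
noncomputable def pseudoChar : Cardinal.{u} :=
  sInf {κ | ℵ₀ ≤ κ ∧ ∀ x : X, ∃ 𝒱 : Set (Set X), #𝒱 ≤ κ ∧
    (∀ V ∈ 𝒱, IsOpen V ∧ x ∈ V) ∧ ⋂₀ 𝒱 = {x}}

/-- The closed pseudocharacter. -/
noncomputable def closedPseudoChar : Cardinal.{u} :=
  sInf {κ | ℵ₀ ≤ κ ∧ ∀ x : X, ∃ 𝒱 : Set (Set X), #𝒱 ≤ κ ∧
    (∀ V ∈ 𝒱, IsOpen V ∧ x ∈ V) ∧ (⋂ V ∈ 𝒱, closure V) = {x}}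

/-- The density. -/
noncomputable def densityCard : Cardinal.{u} :=
  sInf {κ | ℵ₀ ≤ κ ∧ ∃ D : Set X, #D ≤ κ ∧ Dense D}

/-- The star of a set `A` with respect to a family `𝒰`. -/
def st (A : Set X) (𝒰 : Set (Set X)) : Set X := ⋃₀ {U | U ∈ 𝒰 ∧ (A ∩ U).Nonempty}

/-- The θ-closure of a set. -/
def thetaClosure (A : Set X) : Set X :=
  {x | ∀ U : Set X, IsOpen U → x ∈ U → (closure U ∩ A).Nonempty}

/-- The θ-density. -/
noncomputable def thetaDensityCard : Cardinal.{u} :=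
  sInf {κ | ℵ₀ ≤ κ ∧ ∃ D : Set X, #D ≤ κ ∧ thetaClosure X D = Set.univ}

/-- A discrete family of sets: each point has a neighborhood meeting at most one member. -/
def IsDiscreteFamily (𝒰 : Set (Set X)) : Prop :=
  ∀ x : X, ∃ V : Set X, IsOpen V ∧ x ∈ V ∧ {U | U ∈ 𝒰 ∧ (V ∩ U).Nonempty}.Subsingleton

/-- Countable discrete cellularity. -/
def CDC : Prop :=
  ∀ 𝒰 : Set (Set X), (∀ U ∈ 𝒰, IsOpen U ∧ U.Nonempty) → IsDiscreteFamily X 𝒰 → 𝒰.Countable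

/-- Star-cdc: every open cover has a cdc subspace whose star covers the space. -/
def StarCDC : Prop :=
  ∀ 𝒰 : Set (Set X), IsOpenCover X 𝒰 → ∃ Y : Set X, CDC ↥Y ∧ st X Y 𝒰 = Set.univ

/-- H-closed space: every open cover has a finite subfamily with dense union. -/
def IsHClosedSpace : Prop :=
  ∀ 𝒰 : Set (Set X), IsOpenCover X 𝒰 → ∃ 𝒱 ⊆ 𝒰, 𝒱.Finite ∧ Dense (⋃₀ 𝒱)

/-- Countable cellularity (ccc). -/
def CCCSpace : Prop :=
  ∀ 𝒰 : Set (Set X), (∀ U ∈ 𝒰, IsOpen U ∧ U.Nonempty) → 𝒰.PairwiseDisjoint id → 𝒰.Countable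

/-- Weakly Lindelöf space. -/
def WeaklyLindelof : Prop :=
  ∀ 𝒰 : Set (Set X), IsOpenCover X 𝒰 → ∃ 𝒱 ⊆ 𝒰, 𝒱.Countable ∧ Dense (⋃₀ 𝒱)

/-- Almost Lindelöf space. -/
def AlmostLindelof : Prop :=
  ∀ 𝒰 : Set (Set X), IsOpenCover X 𝒰 → ∃ 𝒱 ⊆ 𝒰, 𝒱.Countable ∧ (⋃ V ∈ 𝒱, closure V) = Set.univ

/-- A π-base: a family of nonempty open sets such that every nonempty open set contains one. -/
def IsPiBase (ℬ : Set (Set X)) : Prop :=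
  (∀ B ∈ ℬ, IsOpen B ∧ B.Nonempty) ∧
  ∀ U : Set X, IsOpen U → U.Nonempty → ∃ B ∈ ℬ, B ⊆ U

/-- Power homogeneous: some power of `X` is homogeneous. -/
def PowerHomogeneous : Prop :=
  ∃ ι : Type u, ∀ x y : ι → X, ∃ h : (ι → X) ≃ₜ (ι → X), h x = y

/-- A strong `G_δ`-diagonal of rank 2. -/
def HasStrongRank2Diagonal : Prop :=
  ∃ 𝒰 : ℕ → Set (Set X), (∀ n, IsOpenCover X (𝒰 n)) ∧
    ∀ x : X, (⋂ n, closure (st X (st X {x} (𝒰 n)) (𝒰 n))) = {x}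

/-- A `G_δ`-diagonal of rank 2. -/
def HasRank2Diagonal : Prop :=
  ∃ 𝒰 : ℕ → Set (Set X), (∀ n, IsOpenCover X (𝒰 n)) ∧
    ∀ x : X, (⋂ n, st X (st X {x} (𝒰 n)) (𝒰 n)) = {x}

/-- A `G_δ`-diagonal of rank 3. -/
def HasRank3Diagonal : Prop :=
  ∃ 𝒰 : ℕ → Set (Set X), (∀ n, IsOpenCover X (𝒰 n)) ∧
    ∀ x : X, (⋂ n, st X (st X (st X {x} (𝒰 n)) (𝒰 n)) (𝒰 n)) = {x}

/-- Basically disconnected: the closure of every cozero set is open. -/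
def BasicallyDisconnected : Prop :=
  ∀ f : C(X, ℝ), IsOpen (closure {x | f x ≠ 0})

end Defs


lemma wLdeg_spec (X : Type u) [TopologicalSpace X] :
    ℵ₀ ≤ wLdeg X ∧ ∀ 𝒰 : Set (Set X), IsOpenCover X 𝒰 →
      ∃ 𝒱 ⊆ 𝒰, #𝒱 ≤ wLdeg X ∧ Dense (⋃₀ 𝒱) := by
  have hmem : (max ℵ₀ (2 ^ #X)) ∈ {κ | ℵ₀ ≤ κ ∧ ∀ 𝒰 : Set (Set X), IsOpenCover X 𝒰 →
      ∃ 𝒱 ⊆ 𝒰, #𝒱 ≤ κ ∧ Dense (⋃₀ 𝒱)} := by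
    refine ⟨le_max_left _ _, fun 𝒰 h => ⟨𝒰, subset_rfl, ?_, by rw [h.2]; exact dense_univ⟩⟩
    exact le_max_of_le_right ((Cardinal.mk_set_le 𝒰).trans_eq Cardinal.mk_set)
  exact csInf_mem ⟨_, hmem⟩

lemma tightness_spec (X : Type u) [TopologicalSpace X] :
    ℵ₀ ≤ tightness X ∧ ∀ (A : Set X) (x : X), x ∈ closure A →
      ∃ B ⊆ A, #B ≤ tightness X ∧ x ∈ closure B := by
  have hmem : (max ℵ₀ #X) ∈ {κ | ℵ₀ ≤ κ ∧ ∀ (A : Set X) (x : X), x ∈ closure A →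
      ∃ B ⊆ A, #B ≤ κ ∧ x ∈ closure B} :=
    ⟨le_max_left _ _, fun A x hx =>
      ⟨A, subset_rfl, le_max_of_le_right (Cardinal.mk_set_le A), hx⟩⟩
  exact csInf_mem ⟨_, hmem⟩

lemma cellular_le (X : Type u) [TopologicalSpace X] [ExtremallyDisconnected X]
    (𝒞 : Set (Set X)) (h1 : ∀ C ∈ 𝒞, IsOpen C ∧ C.Nonempty)
    (h2 : 𝒞.PairwiseDisjoint id) : #𝒞 ≤ wLdeg X * tightness X := by
  obtain ⟨hWa, hW⟩ := wLdeg_spec X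
  obtain ⟨hTa, hT⟩ := tightness_spec X
  set G := closure (⋃₀ 𝒞) with hGdef
  choose B hBsub hBcard hBcl using fun x : G => hT (⋃₀ 𝒞) x x.2
  set Afam : G → Set (Set X) := fun x => {C | C ∈ 𝒞 ∧ (C ∩ B x).Nonempty} with hAdef
  have hAsub : ∀ x, Afam x ⊆ 𝒞 := fun x C hC => hC.1
  have hAcard : ∀ x, #(Afam x) ≤ tightness X := by
    intro x
    refine le_trans ?_ (hBcard x)
    choose b hb using fun C : Afam x => C.2.2
    refine Cardinal.mk_le_of_injective (f := fun C => (⟨b C, (hb C).2⟩ : B x)) ?_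
    intro C C' hEq
    apply Subtype.ext
    refine h2.elim_set C.2.1 C'.2.1 (b C) (hb C).1 ?_
    rw [Subtype.mk.injEq] at hEq
    rw [hEq]; exact (hb C').1
  have hBAx : ∀ x : G, (x : X) ∈ closure (⋃₀ Afam x) := by
    intro x
    refine closure_mono ?_ (hBcl x)
    intro c hc
    obtain ⟨C, hC, hcC⟩ := hBsub x hc
    exact ⟨C, ⟨hC, ⟨c, hcC, hc⟩⟩, hcC⟩
  set 𝒰 : Set (Set X) := insert Gᶜ ((fun x : G => closure (⋃₀ Afam x)) '' Set.univ) with h𝒰def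
  have hcov : IsOpenCover X 𝒰 := by
    constructor
    · intro U hU
      rcases mem_insert_iff.mp hU with rfl | ⟨x, -, rfl⟩
      · exact isClosed_closure.isOpen_compl
      · exact ExtremallyDisconnected.open_closure _
          (isOpen_sUnion fun C hC => (h1 C (hAsub x hC)).1)
    · apply eq_univ_of_forall
      intro y
      by_cases hy : y ∈ G
      · exact ⟨closure (⋃₀ Afam ⟨y, hy⟩), Or.inr ⟨⟨y, hy⟩, trivial, rfl⟩, hBAx ⟨y, hy⟩⟩
      · exact ⟨Gᶜ, Or.inl rfl, hy⟩
  obtain ⟨𝒱, h𝒱sub, h𝒱card, h𝒱dense⟩ := hW 𝒰 hcov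
  set ℱ : Set X → Set (Set X) := fun V => {C | C ∈ 𝒞 ∧ (C ∩ V).Nonempty} with hℱdef
  have hcover : 𝒞 ⊆ ⋃ V ∈ 𝒱, ℱ V := by
    intro C hC
    obtain ⟨hCo, hCne⟩ := h1 C hC
    obtain ⟨z, hz1, V, hV, hzV⟩ := h𝒱dense.inter_open_nonempty C hCo hCne
    exact mem_biUnion hV ⟨hC, z, hz1, hzV⟩
  have hℱcard : ∀ V ∈ 𝒱, #(ℱ V) ≤ tightness X := by
    intro V hV
    rcases mem_insert_iff.mp (h𝒱sub hV) with rfl | ⟨x, -, rfl⟩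
    · have hemp : ℱ Gᶜ = ∅ := by
        ext C
        simp only [hℱdef, mem_setOf_eq, mem_empty_iff_false, iff_false, not_and]
        rintro hC ⟨z, hzC, hzG⟩
        exact hzG (subset_closure ⟨C, hC, hzC⟩)
      rw [hemp]; simp
    · refine le_trans (Cardinal.mk_le_mk_of_subset ?_) (hAcard x)
      rintro C ⟨hC, z, hzC, hzcl⟩
      have hmeet : (C ∩ ⋃₀ Afam x).Nonempty := by
        by_contra hno
        rw [Set.not_nonempty_iff_eq_empty] at hno
        have hsub : closure (⋃₀ Afam x) ⊆ Cᶜ :=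
          closure_minimal
            (fun w hw hwC => (Set.eq_empty_iff_forall_notMem.mp hno w) ⟨hwC, hw⟩)
            (h1 C hC).1.isClosed_compl
        exact hsub hzcl hzC
      obtain ⟨w, hwC, C', hC', hwC'⟩ := hmeet
      have hCC : C = C' := h2.elim_set hC (hAsub x hC') w hwC hwC'
      rw [hCC]; exact hC'
  calc #𝒞 ≤ #(⋃ V ∈ 𝒱, ℱ V) := Cardinal.mk_le_mk_of_subset hcover
    _ ≤ #𝒱 * ⨆ V : 𝒱, #(ℱ V) := Cardinal.mk_biUnion_le ℱ 𝒱
    _ ≤ wLdeg X * tightness X := mul_le_mul' h𝒱card (ciSup_le' fun V => hℱcard V V.2)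

theorem stmt0 (X : Type u) [TopologicalSpace X] [T2Space X] [ExtremallyDisconnected X] :
    cellularity X ≤ wLdeg X * tightness X := by
  have hmul : ℵ₀ ≤ wLdeg X * tightness X := by
    calc ℵ₀ ≤ wLdeg X := (wLdeg_spec X).1
      _ = wLdeg X * 1 := (mul_one _).symm
      _ ≤ wLdeg X * tightness X :=
          mul_le_mul_right (le_trans Cardinal.one_lt_aleph0.le (tightness_spec X).1) _
  refine max_le hmul (ciSup_le' ?_)
  rintro ⟨𝒞, hc1, hc2⟩
  exact cellular_le X 𝒞 hc1 hc2
end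

section
/- Every weakly Lindelöf, basically disconnected Tychonoff space of countable tightness has countable cellularity. -/
open Cardinal Set

universe u

section AuxProof
variable {X : Type u} [TopologicalSpace X]

/-- A countable union of cozero sets is a cozero set. -/
lemma cozero_iUnion_aux (f : ℕ → C(X, ℝ)) :
    ∃ g : C(X, ℝ), {x | g x ≠ 0} = ⋃ n, {x | f n x ≠ 0} := by
  classical
  set t : ℕ → X → ℝ := fun n x => min ((1/2 : ℝ)^n) |f n x| with ht
  have ht0 : ∀ n x, 0 ≤ t n x := fun n x => le_min (by positivity) (abs_nonneg _)
  have htc : ∀ n, Continuous (t n) := fun n =>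
    continuous_const.min (map_continuous (f n)).abs
  have hble : ∀ n x, t n x ≤ (1/2 : ℝ)^n := fun n x => min_le_left _ _
  have hb : ∀ n x, ‖t n x‖ ≤ (1/2 : ℝ)^n := fun n x => by
    rw [Real.norm_eq_abs, abs_of_nonneg (ht0 n x)]; exact hble n x
  have hu : Summable (fun n => (1/2 : ℝ)^n) :=
    summable_geometric_of_lt_one (by norm_num) (by norm_num)
  have hgc : Continuous fun x => ∑' n, t n x := continuous_tsum htc hu hb
  have hsx : ∀ x, Summable fun n => t n x := fun x =>
    Summable.of_nonneg_of_le (fun n => ht0 n x) (fun n => hble n x) hu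
  refine ⟨⟨fun x => ∑' n, t n x, hgc⟩, ?_⟩
  ext x
  simp only [ContinuousMap.coe_mk, Set.mem_setOf_eq, Set.mem_iUnion]
  constructor
  · intro hne
    by_contra hall
    push_neg at hall
    apply hne
    have hz : ∀ n, t n x = 0 := by
      intro n
      simp [ht, hall n, min_eq_right (by positivity : (0:ℝ) ≤ (1/2 : ℝ)^n)]
    calc ∑' n, t n x = ∑' _ : ℕ, (0:ℝ) := tsum_congr hz
      _ = 0 := tsum_zero
  · rintro ⟨n, hn⟩
    have hpos : 0 < t n x := lt_min (by positivity) (abs_pos.mpr hn)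
    exact (Summable.tsum_pos (hsx x) (fun j => ht0 j x) n hpos).ne'

end AuxProof

theorem stmt4 (X : Type u) [TopologicalSpace X] [T35Space X]
    (hwL : WeaklyLindelof X) (hbd : BasicallyDisconnected X)
    (ht : ∀ (A : Set X) (x : X), x ∈ closure A → ∃ B ⊆ A, B.Countable ∧ x ∈ closure B) :
    CCCSpace X := by
  classical
  intro 𝒰 h𝒰 hdisj
  by_contra hunc
  -- Step 1: inside each U ∈ 𝒰 choose a nonempty cozero set V U.
  have hchoice : ∀ U : Set X, ∃ V : Set X, U ∈ 𝒰 →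
      V.Nonempty ∧ V ⊆ U ∧ IsOpen V ∧ IsOpen (closure V) ∧
        ∃ f : C(X, ℝ), {x | f x ≠ 0} = V := by
    intro U
    by_cases hU : U ∈ 𝒰
    · obtain ⟨x, hx⟩ := (h𝒰 U hU).2
      obtain ⟨f, hf, hf0, hf1⟩ := CompletelyRegularSpace.completely_regular x Uᶜ
        (h𝒰 U hU).1.isClosed_compl (by simpa using hx)
      set g : X → ℝ := fun y => 1 - (f y : ℝ) with hg
      have hgc : Continuous g := continuous_const.sub (continuous_subtype_val.comp hf)
      have hgopen : IsOpen {y | g y ≠ 0} :=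
        isOpen_compl_singleton.preimage hgc
      have hsub : {y | g y ≠ 0} ⊆ U := by
        intro y hy
        by_contra hyU
        apply hy
        have : f y = 1 := hf1 hyU
        simp [hg, this]
      have hmem : x ∈ {y | g y ≠ 0} := by
        simp [hg, hf0]
      refine ⟨{y | g y ≠ 0}, fun _ => ⟨⟨x, hmem⟩, hsub, hgopen, ?_, ⟨⟨g, hgc⟩, rfl⟩⟩⟩
      exact hbd ⟨g, hgc⟩
    · exact ⟨∅, fun h => absurd h hU⟩
  choose V hV using hchoice
  set K : Set X → Set X := fun U => closure (V U) with hK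
  -- disjointness of the K's
  have hKdisj : ∀ U ∈ 𝒰, ∀ U' ∈ 𝒰, U ≠ U' → Disjoint (K U) (K U') := by
    intro U hU U' hU' hne
    have hd : Disjoint U U' := hdisj hU hU' hne
    have hVV : Disjoint (V U) (V U') := hd.mono (hV U hU).2.1 (hV U' hU').2.1
    have h1 : Disjoint (closure (V U)) (V U') := hVV.closure_left (hV U' hU').2.2.1
    exact h1.closure_right (hV U hU).2.2.2.1
  -- closures of countable unions of the K's are open
  have hCopen : ∀ S : Set (Set X), S ⊆ 𝒰 → S.Countable →
      IsOpen (closure (⋃ U ∈ S, K U)) := by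
    intro S hS hSc
    have hVU : closure (⋃ U ∈ S, K U) = closure (⋃ U ∈ S, V U) := by
      apply subset_antisymm
      · apply closure_minimal _ isClosed_closure
        exact Set.iUnion₂_subset fun U hU =>
          closure_mono fun x hx => Set.mem_iUnion₂.mpr ⟨U, hU, hx⟩
      · exact closure_mono (Set.iUnion₂_mono fun U hU => subset_closure)
    rw [hVU]
    rcases S.eq_empty_or_nonempty with rfl | hne
    · simp
    obtain ⟨e, he⟩ := Set.Countable.exists_eq_range hSc hne
    have heq : ⋃ U ∈ S, V U = ⋃ n, V (e n) := by
      rw [he]; exact Set.biUnion_range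
    rw [heq]
    have hcz : ∀ n, ∃ f : C(X, ℝ), {x | f x ≠ 0} = V (e n) := fun n =>
      (hV (e n) (hS (he ▸ Set.mem_range_self n))).2.2.2.2
    choose f hf using hcz
    obtain ⟨g, hg⟩ := cozero_iUnion_aux f
    have : ⋃ n, V (e n) = {x | g x ≠ 0} := by
      rw [hg]; exact (Set.iUnion_congr fun n => hf n).symm
    rw [this]
    exact hbd g
  set G : Set X := ⋃ U ∈ 𝒰, K U with hG
  set 𝒞 : Set (Set X) := insert (closure G)ᶜ
    {C | ∃ S : Set (Set X), S ⊆ 𝒰 ∧ S.Countable ∧ C = closure (⋃ U ∈ S, K U)} with h𝒞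
  have hcov : IsOpenCover X 𝒞 := by
    constructor
    · rintro C hC
      rcases hC with rfl | ⟨S, hS, hSc, rfl⟩
      · exact isClosed_closure.isOpen_compl
      · exact hCopen S hS hSc
    · apply Set.eq_univ_of_forall
      intro x
      by_cases hx : x ∈ closure G
      · obtain ⟨B, hBsub, hBc, hxB⟩ := ht G x hx
        have hpick : ∀ b : X, ∃ U : Set X, b ∈ B → U ∈ 𝒰 ∧ b ∈ K U := by
          intro b
          by_cases hb : b ∈ B
          · obtain ⟨U, hU, hbU⟩ := Set.mem_iUnion₂.mp (hBsub hb)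
            exact ⟨U, fun _ => ⟨hU, hbU⟩⟩
          · exact ⟨∅, fun h => absurd h hb⟩
        choose W hW using hpick
        refine Set.mem_sUnion.mpr ⟨closure (⋃ U ∈ W '' B, K U),
          Set.mem_insert_iff.mpr (Or.inr ⟨W '' B, ?_, hBc.image W, rfl⟩), ?_⟩
        · rintro _ ⟨b, hb, rfl⟩; exact (hW b hb).1
        · refine closure_mono ?_ hxB
          intro b hb
          exact Set.mem_iUnion₂.mpr ⟨W b, ⟨b, hb, rfl⟩, (hW b hb).2⟩
      · exact Set.mem_sUnion.mpr ⟨(closure G)ᶜ, Set.mem_insert _ _, hx⟩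
  obtain ⟨𝒱, h𝒱sub, h𝒱c, h𝒱d⟩ := hwL 𝒞 hcov
  have hsel : ∀ C : Set X, ∃ S : Set (Set X), S ⊆ 𝒰 ∧ S.Countable ∧
      (C ∈ 𝒱 → C ≠ (closure G)ᶜ → C = closure (⋃ U ∈ S, K U)) := by
    intro C
    by_cases h : C ∈ 𝒱 ∧ C ≠ (closure G)ᶜ
    · rcases h𝒱sub h.1 with h1 | ⟨S, hS, hSc, hCeq⟩
      · exact absurd h1 h.2
      · exact ⟨S, hS, hSc, fun _ _ => hCeq⟩
    · exact ⟨∅, Set.empty_subset _, Set.countable_empty,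
        fun h1 h2 => absurd ⟨h1, h2⟩ h⟩
  choose Sel hSel1 hSel2 hSel3 using hsel
  set T : Set (Set X) := ⋃ C ∈ 𝒱, Sel C with hT
  have hTc : T.Countable := h𝒱c.biUnion fun C _ => hSel2 C
  have hnsub : ¬ 𝒰 ⊆ T := fun h => hunc (hTc.mono h)
  obtain ⟨Wu, hWu, hWT⟩ := Set.not_subset.mp hnsub
  have hKne : (K Wu).Nonempty := (hV Wu hWu).1.mono subset_closure
  have hKopen : IsOpen (K Wu) := (hV Wu hWu).2.2.2.1
  obtain ⟨y, hyK, hyV⟩ := h𝒱d.inter_open_nonempty (K Wu) hKopen hKne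
  obtain ⟨C, hC𝒱, hyC⟩ := hyV
  by_cases hCc : C = (closure G)ᶜ
  · subst hCc
    exact hyC (subset_closure (Set.mem_iUnion₂.mpr ⟨Wu, hWu, hyK⟩))
  · have hCeq := hSel3 C hC𝒱 hCc
    have hWnot : Wu ∉ Sel C := fun h => hWT (Set.mem_biUnion hC𝒱 h)
    have hdisjcl : Disjoint (K Wu) (closure (⋃ U ∈ Sel C, K U)) := by
      refine Disjoint.closure_right ?_ hKopen
      refine Set.disjoint_iUnion₂_right.mpr fun U hU => ?_
      exact hKdisj Wu hWu U (hSel1 C hU) (fun e => hWnot (e ▸ hU))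
    exact Set.disjoint_left.mp hdisjcl hyK (hCeq ▸ hyC)
end

section
/- If X is an almost Lindelöf Hausdorff space with a strong G_δ-diagonal of rank 2, then |X| ≤ 2^ℵ₀. -/
open Cardinal Set

universe u

theorem stmt5 (X : Type u) [TopologicalSpace X] [T2Space X]
    (haL : AlmostLindelof X) (hd : HasStrongRank2Diagonal X) :
    #X ≤ 2 ^ ℵ₀ := by
  obtain ⟨𝒰, hcov, hsep⟩ := hd
  choose 𝒱 h𝒱sub h𝒱cnt h𝒱cov using fun n => haL (𝒰 n) (hcov n)
  have hpick : ∀ (x : X) (n : ℕ), ∃ V, V ∈ 𝒱 n ∧ x ∈ closure V := by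
    intro x n
    have hx : x ∈ ⋃ V ∈ 𝒱 n, closure V := (h𝒱cov n).symm ▸ Set.mem_univ x
    simpa using hx
  choose f hf1 hf2 using hpick
  have hinj : Function.Injective
      (fun x : X => fun n : ℕ => (⟨f x n, hf1 x n⟩ : ↥(𝒱 n))) := by
    intro x y hxy
    have key : ∀ n, y ∈ closure (st X (st X {x} (𝒰 n)) (𝒰 n)) := by
      intro n
      have heq : f x n = f y n := congrArg Subtype.val (congrFun hxy n)
      have hVy : y ∈ closure (f x n) := heq ▸ hf2 y n
      have hVU : f x n ∈ 𝒰 n := h𝒱sub n (hf1 x n)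
      -- choose U ∈ 𝒰 n containing x
      have hxU : x ∈ ⋃₀ 𝒰 n := (hcov n).2.symm ▸ Set.mem_univ x
      obtain ⟨U, hU, hxUmem⟩ := hxU
      have hUopen : IsOpen U := (hcov n).1 U hU
      have hUV : (U ∩ f x n).Nonempty := by
        have := (mem_closure_iff.mp (hf2 x n)) U hUopen hxUmem
        exact this
      have hUst : U ⊆ st X {x} (𝒰 n) := by
        intro z hz
        exact ⟨U, ⟨hU, ⟨x, Set.mem_inter rfl hxUmem⟩⟩, hz⟩
      have hVst : f x n ⊆ st X (st X {x} (𝒰 n)) (𝒰 n) := by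
        intro z hz
        refine ⟨f x n, ⟨hVU, ?_⟩, hz⟩
        obtain ⟨w, hw1, hw2⟩ := hUV
        exact ⟨w, hUst hw1, hw2⟩
      exact closure_mono hVst hVy
    have : y ∈ ⋂ n, closure (st X (st X {x} (𝒰 n)) (𝒰 n)) :=
      Set.mem_iInter.mpr key
    rw [hsep x] at this
    exact this.symm
  have h1 : #X ≤ #(∀ n : ℕ, ↥(𝒱 n)) := Cardinal.mk_le_of_injective hinj
  have h2 : #(∀ n : ℕ, ↥(𝒱 n)) = Cardinal.prod fun n => #(↥(𝒱 n)) :=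
    Cardinal.mk_pi _
  have h3 : Cardinal.prod (fun n : ℕ => #(↥(𝒱 n))) ≤
      Cardinal.prod (fun _ : ℕ => (2 ^ ℵ₀ : Cardinal.{u})) := by
    apply Cardinal.prod_le_prod
    intro n
    exact ((h𝒱cnt n).le_aleph0).trans (Cardinal.cantor ℵ₀).le
  have h4 : Cardinal.prod (fun _ : ℕ => (2 ^ ℵ₀ : Cardinal.{u})) = 2 ^ ℵ₀ := by
    rw [Cardinal.prod_const, Cardinal.mk_nat, Cardinal.lift_aleph0,
      Cardinal.lift_id'.{0,u}, ← Cardinal.power_mul, Cardinal.aleph0_mul_aleph0]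
  calc #X ≤ _ := h1
    _ = _ := h2
    _ ≤ _ := h3
    _ = _ := h4
end

section
/- If X is a star-cdc Hausdorff space with a G_δ-diagonal of rank 3, then |X| ≤ 2^ℵ₀. -/
open Cardinal Set

universe u

/-!
Colour a pair `a ≠ b` by the least `n` with `b ∉ St³(a, 𝒰ₙ)`; the colouring is symmetric, as
`b ∈ St³(a, 𝒰)` says that a chain of three members of `𝒰` links `a` to `b`. If `|X| > 𝔠`, the
countable Erdős–Rado theorem `(2^ℵ₀)⁺ → (ℵ₁)²_ℵ₀` yields an uncountable `H` and an `n` such that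
`b ∉ St³(a, 𝒰ₙ)` for all distinct `a, b ∈ H`. Take a cdc subspace `Y` with `St(Y, 𝒰ₙ) = X` and
members `Uₐ ∋ a` of `𝒰ₙ` meeting `Y`. No member of `𝒰ₙ` meets two of the `Uₐ`, so the traces
`Uₐ ∩ Y` form an uncountable discrete family of nonempty open subsets of `Y`: a contradiction.

Erdős–Rado is proved in the classical way. A set `A` of size `𝔠` realizes, over each of its
countable subsets `B`, the type of every point outside `B`; a point `y ∉ A` then yields an
injective `ω₁`-sequence `s` in `A` with `c (s w) (s v) = c y (s v)` for `v < w`, and `c y ∘ s` is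
constant on an uncountable set of indices.
-/

open scoped Ordinal

theorem mk_toType_omega_one : #(ω₁ : Ordinal.{u}).ToType = ℵ₁ := by
  rw [mk_toType, Ordinal.card_omega]

instance : Uncountable (ω₁ : Ordinal.{u}).ToType :=
  aleph0_lt_mk_iff.1 (mk_toType_omega_one ▸ aleph0_lt_aleph_one)

theorem countable_Iio_toType_omega_one (w : (ω₁ : Ordinal.{u}).ToType) : (Iio w).Countable := by
  rw [← le_aleph0_iff_set_countable, ← lt_aleph_one_iff, ← mk_toType_omega_one]
  exact mk_Iio_lt w (by rw [mk_toType_omega_one, ord_aleph, Ordinal.type_toType])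

theorem exists_gt_of_countable_toType_omega_one {S : Set (ω₁ : Ordinal.{u}).ToType}
    (hS : S.Countable) : ∃ w, ∀ v ∈ S, v < w := by
  refine not_isCofinal_iff.1 fun hcof => ?_
  have := (Order.cof_le hcof).trans_lt (lt_aleph_one_iff.2 (le_aleph0_iff_set_countable.2 hS))
  rw [Ordinal.cof_toType, cof_omega_one] at this
  exact lt_irrefl _ this

theorem mk_iUnion_le_continuum {α ι : Type u} {f : ι → Set α} (hι : #ι ≤ 𝔠)
    (hf : ∀ i, #(f i) ≤ 𝔠) : #(⋃ i, f i) ≤ 𝔠 :=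
  (mk_iUnion_le f).trans ((mul_le_mul' hι (ciSup_le' hf)).trans continuum_mul_self.le)

section CountableClosure

variable {α : Type u} (S : Set α) (F : (ℕ → α) → Set α)

noncomputable def countableClosureStage : (ω₁ : Ordinal.{u}).ToType → Set α :=
  wellFounded_lt.fix fun w stage => S ∪ ⋃ σ : ℕ → ⋃ v : Iio w, stage v v.2, F (Subtype.val ∘ σ)

theorem countableClosureStage_eq (w : (ω₁ : Ordinal.{u}).ToType) :
    countableClosureStage S F w =
      S ∪ ⋃ σ : ℕ → ⋃ v : Iio w, countableClosureStage S F v, F (Subtype.val ∘ σ) :=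
  wellFounded_lt.fix_eq _ w

variable {S F}

theorem mk_countableClosureStage_le (hS : #S ≤ 𝔠) (hF : ∀ σ, #(F σ) ≤ 𝔠)
    (w : (ω₁ : Ordinal.{u}).ToType) : #(countableClosureStage S F w) ≤ 𝔠 := by
  induction w using WellFoundedLT.induction with
  | ind w ih =>
  set T := ⋃ v : Iio w, countableClosureStage S F v
  have hT : #T ≤ 𝔠 := mk_iUnion_le_continuum
    ((countable_Iio_toType_omega_one w).le_aleph0.trans aleph0_le_continuum) fun v => ih v v.2
  have hseq : #(ℕ → T) ≤ 𝔠 := by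
    simpa using (power_le_power_right hT).trans continuum_power_aleph0.le
  rw [countableClosureStage_eq]
  exact (mk_union_le _ _).trans
    ((add_le_add hS (mk_iUnion_le_continuum hseq fun σ => hF _)).trans continuum_add_self.le)

/-- A sequence in the union of the `ω₁` stages already lies in one stage, as `ω₁` has uncountable
cofinality. -/
theorem exists_countablyClosed_superset (hS : #S ≤ 𝔠) (hF : ∀ σ, #(F σ) ≤ 𝔠) :
    ∃ A, S ⊆ A ∧ #A ≤ 𝔠 ∧ ∀ σ : ℕ → α, (∀ n, σ n ∈ A) → F σ ⊆ A := by
  refine ⟨⋃ w, countableClosureStage S F w, fun x hx => ?_, ?_, fun σ hσ => ?_⟩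
  · obtain ⟨w⟩ : Nonempty (ω₁ : Ordinal.{u}).ToType := inferInstance
    exact mem_iUnion.2 ⟨w, by rw [countableClosureStage_eq]; exact Or.inl hx⟩
  · exact mk_iUnion_le_continuum (mk_toType_omega_one.trans_le aleph_one_le_continuum)
      (mk_countableClosureStage_le hS hF)
  · choose idx hidx using fun n => mem_iUnion.1 (hσ n)
    obtain ⟨w, hw⟩ := exists_gt_of_countable_toType_omega_one (countable_range idx)
    intro x hx
    refine mem_iUnion.2 ⟨w, ?_⟩
    rw [countableClosureStage_eq]
    exact Or.inr (mem_iUnion.2 ⟨fun n => ⟨σ n, mem_iUnion.2 ⟨⟨idx n, hw _ ⟨n, rfl⟩⟩, hidx n⟩⟩, hx⟩)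

end CountableClosure

section ErdosRado

variable {α : Type u} (c : α → α → ℕ)

def IsCountablySaturated (A : Set α) : Prop :=
  ∀ B ⊆ A, B.Countable → ∀ y ∉ B, ∃ x ∈ A, x ∉ B ∧ ∀ b ∈ B, c x b = c y b

theorem exists_mk_le_continuum_isCountablySaturated [Nonempty α] :
    ∃ A : Set α, #A ≤ 𝔠 ∧ IsCountablySaturated c A := by
  -- `F σ` holds, for each `τ : ℕ → ℕ` realized off `range σ` by some `x` with `c x ∘ σ = τ`,
  -- one such realization.
  obtain ⟨A, hsub, hA, hclosed⟩ := exists_countablyClosed_superset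
    (S := {Classical.arbitrary α})
    (F := fun σ => range fun τ : ℕ → ℕ =>
      Classical.epsilon fun x => x ∉ range σ ∧ ∀ n, c x (σ n) = τ n)
    (by simpa using one_le_aleph0.trans aleph0_le_continuum)
    (fun σ => lift_le.{0}.1 (mk_range_le_lift.trans (by simp)))
  refine ⟨A, hA, fun B hBA hB y hy => ?_⟩
  rcases B.eq_empty_or_nonempty with rfl | hne
  · exact ⟨_, hsub rfl, notMem_empty _, by simp⟩
  obtain ⟨σ, rfl⟩ := hB.exists_eq_range hne
  have hx := Classical.epsilon_spec
    (p := fun x => x ∉ range σ ∧ ∀ n, c x (σ n) = c y (σ n)) ⟨y, hy, fun _ => rfl⟩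
  refine ⟨_, hclosed σ (fun n => hBA ⟨n, rfl⟩) ⟨fun n => c y (σ n), rfl⟩, hx.1, ?_⟩
  rintro _ ⟨n, rfl⟩
  exact hx.2 n

theorem IsCountablySaturated.exists_injective_endHomogeneous {A : Set α}
    (hA : IsCountablySaturated c A) {y : α} (hy : y ∉ A) :
    ∃ s : (ω₁ : Ordinal.{u}).ToType → α,
      Function.Injective s ∧ ∀ v w, v < w → c (s w) (s v) = c y (s v) := by
  have : Nonempty α := ⟨y⟩
  let s : (ω₁ : Ordinal.{u}).ToType → α := wellFounded_lt.fix fun w prev =>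
    Classical.epsilon fun x =>
      x ∈ A ∧ ∀ v (hv : v < w), x ≠ prev v hv ∧ c x (prev v hv) = c y (prev v hv)
  have hs_eq (w) : s w =
      Classical.epsilon fun x => x ∈ A ∧ ∀ v < w, x ≠ s v ∧ c x (s v) = c y (s v) :=
    wellFounded_lt.fix_eq _ w
  have hs (w) : s w ∈ A ∧ ∀ v < w, s w ≠ s v ∧ c (s w) (s v) = c y (s v) := by
    induction w using WellFoundedLT.induction with
    | ind w ih =>
    obtain ⟨x, hxA, hxB, hx⟩ := hA (s '' Iio w) (by rintro _ ⟨v, hv, rfl⟩; exact (ih v hv).1)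
      ((countable_Iio_toType_omega_one w).image s) y
      (fun ⟨v, hv, hyv⟩ => hy (hyv ▸ (ih v hv).1))
    have hex : ∃ x, x ∈ A ∧ ∀ v < w, x ≠ s v ∧ c x (s v) = c y (s v) :=
      ⟨x, hxA, fun v hv => ⟨fun h => hxB ⟨v, hv, h.symm⟩, hx _ ⟨v, hv, rfl⟩⟩⟩
    rw [hs_eq]
    exact Classical.epsilon_spec hex
  refine ⟨s, fun v w hvw => ?_, fun v w hvw => ((hs w).2 v hvw).2⟩
  rcases lt_trichotomy v w with h | h | h
  · exact absurd hvw.symm ((hs w).2 v h).1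
  · exact h
  · exact absurd hvw ((hs v).2 w h).1

theorem erdos_rado (hc : ∀ x y, c x y = c y x) (hα : 𝔠 < #α) :
    ∃ n, ∃ H : Set α, ¬ H.Countable ∧ H.Pairwise fun x y => c x y = n := by
  have : Nonempty α := mk_ne_zero_iff.1 (zero_le.trans_lt hα).ne'
  obtain ⟨A, hAcard, hA⟩ := exists_mk_le_continuum_isCountablySaturated c
  obtain ⟨y, hy⟩ : ∃ y, y ∉ A := by
    by_contra! h
    rw [eq_univ_of_forall h, mk_univ] at hAcard
    exact hAcard.not_gt hα
  obtain ⟨s, hsinj, hs⟩ := hA.exists_injective_endHomogeneous c hy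
  obtain ⟨n, hn⟩ : ∃ n, ¬ {w | c y (s w) = n}.Countable := by
    by_contra! h
    have hcover : (⋃ n, {w | c y (s w) = n}) = Set.univ := iUnion_eq_univ_iff.2 fun w => ⟨_, rfl⟩
    exact not_countable_univ (hcover ▸ countable_iUnion h)
  refine ⟨n, s '' {w | c y (s w) = n},
    fun h => hn (countable_of_injective_of_countable_image hsinj.injOn h), ?_⟩
  rintro _ ⟨v, hv, rfl⟩ _ ⟨w, hw, rfl⟩ hne
  rcases lt_or_gt_of_ne (ne_of_apply_ne s hne) with h | h
  · rw [hc, hs v w h, hv]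
  · rw [hs w v h, hw]

theorem exists_uncountable_pairwise_of_forall_ne {R : ℕ → α → α → Prop}
    (h : ∀ x y, x ≠ y → ∃ n, R n x y) (hR : ∀ n x y, R n x y → R n y x) (hα : 𝔠 < #α) :
    ∃ n, ∃ H : Set α, ¬ H.Countable ∧ H.Pairwise (R n) := by
  obtain ⟨n, H, hH, hpair⟩ := erdos_rado (fun x y => sInf {n | R n x y})
    (fun x y => congrArg sInf (ext fun n => ⟨hR n x y, hR n y x⟩)) hα
  refine ⟨n, H, hH, fun x hx y hy hxy => ?_⟩
  have := Nat.sInf_mem (s := {n | R n x y}) (h x y hxy)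
  rwa [hpair hx hy hxy] at this

end ErdosRado

section StarCovers

variable {X : Type u} {𝒰 : Set (Set X)}

theorem mem_st_iff {A : Set X} {y : X} :
    y ∈ st X A 𝒰 ↔ ∃ U ∈ 𝒰, (A ∩ U).Nonempty ∧ y ∈ U := by
  simp only [st, mem_sUnion, mem_ofPred_eq, and_assoc]

theorem subset_st {A U : Set X} (hU : U ∈ 𝒰) (hAU : (A ∩ U).Nonempty) : U ⊆ st X A 𝒰 :=
  subset_sUnion_of_mem ⟨hU, hAU⟩

theorem st_inter_nonempty_comm {A B : Set X} :
    (st X A 𝒰 ∩ B).Nonempty ↔ (A ∩ st X B 𝒰).Nonempty := by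
  simp only [inter_nonempty, mem_st_iff]
  constructor
  · rintro ⟨y, ⟨U, hU, ⟨x, hxA, hxU⟩, hyU⟩, hyB⟩
    exact ⟨x, hxA, U, hU, ⟨y, hyB, hyU⟩, hxU⟩
  · rintro ⟨x, hxA, U, hU, ⟨y, hyB, hyU⟩, hxU⟩
    exact ⟨y, ⟨U, hU, ⟨x, hxA, hxU⟩, hyU⟩, hyB⟩

theorem mem_st_iff_inter_st_singleton_nonempty {A : Set X} {y : X} :
    y ∈ st X A 𝒰 ↔ (A ∩ st X {y} 𝒰).Nonempty := by
  rw [← st_inter_nonempty_comm, inter_singleton_nonempty]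

theorem mem_st_st_st_singleton_comm {x y : X} :
    y ∈ st X (st X (st X {x} 𝒰) 𝒰) 𝒰 ↔ x ∈ st X (st X (st X {y} 𝒰) 𝒰) 𝒰 := by
  rw [mem_st_iff_inter_st_singleton_nonempty, st_inter_nonempty_comm, st_inter_nonempty_comm,
    singleton_inter_nonempty]

end StarCovers

theorem StarCDC.countable_of_pairwise_notMem_st_st_st {X : Type u} [TopologicalSpace X]
    {𝒰 : Set (Set X)} (hX : StarCDC X) (h𝒰 : IsOpenCover X 𝒰)
    {H : Set X} (hH : H.Pairwise fun a b => b ∉ st X (st X (st X {a} 𝒰) 𝒰) 𝒰) :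
    H.Countable := by
  obtain ⟨Y, hY, hYst⟩ := hX 𝒰 h𝒰
  choose U hU𝒰 hUY haU using fun a => mem_st_iff.1 (hYst ▸ mem_univ a : a ∈ st X Y 𝒰)
  have heq : ∀ a ∈ H, ∀ b ∈ H, ∀ V ∈ 𝒰,
      (V ∩ U a).Nonempty → (V ∩ U b).Nonempty → a = b := by
    rintro a ha b hb V hV ⟨p, hpV, hpa⟩ ⟨q, hqV, hqb⟩
    by_contra hab
    have hUa : U a ⊆ st X {a} 𝒰 := subset_st (hU𝒰 a) ⟨a, rfl, haU a⟩
    have hV : V ⊆ st X (st X {a} 𝒰) 𝒰 := subset_st hV ⟨p, hUa hpa, hpV⟩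
    exact hH ha hb hab (subset_st (hU𝒰 b) ⟨q, hV hqV, hqb⟩ (haU b))
  let G : X → Set Y := fun a => Subtype.val ⁻¹' U a
  have hG : ∀ a, (G a).Nonempty := fun a =>
    let ⟨p, hpY, hpU⟩ := hUY a
    ⟨⟨p, hpY⟩, hpU⟩
  have hcount : (G '' H).Countable := by
    refine hY _ ?_ fun z => ?_
    · rintro _ ⟨a, -, rfl⟩
      exact ⟨(h𝒰.1 _ (hU𝒰 a)).preimage continuous_subtype_val, hG a⟩
    · obtain ⟨V, hV, hzV⟩ := mem_sUnion.1 (h𝒰.2 ▸ mem_univ (z : X))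
      refine ⟨Subtype.val ⁻¹' V, (h𝒰.1 V hV).preimage continuous_subtype_val, hzV, ?_⟩
      rintro _ ⟨⟨a, ha, rfl⟩, p, hpV, hpa⟩ _ ⟨⟨b, hb, rfl⟩, q, hqV, hqb⟩
      rw [heq a ha b hb V hV ⟨p, hpV, hpa⟩ ⟨q, hqV, hqb⟩]
  refine countable_of_injective_of_countable_image (fun a ha b hb hab => ?_) hcount
  obtain ⟨p, hp⟩ := hG a
  exact heq a ha b hb (U a) (hU𝒰 a) ⟨a, haU a, haU a⟩ ⟨p, hp, (hab ▸ hp : p ∈ G b)⟩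

theorem stmt8_general (X : Type u) [TopologicalSpace X]
    (hs : StarCDC X) (hd : HasRank3Diagonal X) :
    #X ≤ 2 ^ ℵ₀ := by
  rw [two_power_aleph0]
  by_contra! hX
  obtain ⟨𝒰, h𝒰, hdiag⟩ := hd
  have hsep (a b : X) (hab : a ≠ b) :
      ∃ n, b ∉ st X (st X (st X {a} (𝒰 n)) (𝒰 n)) (𝒰 n) := by
    have hb : b ∉ ⋂ n, st X (st X (st X {a} (𝒰 n)) (𝒰 n)) (𝒰 n) := by
      rw [hdiag]
      exact Ne.symm hab
    simpa using hb
  obtain ⟨n, H, hH, hpair⟩ := exists_uncountable_pairwise_of_forall_ne hsep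
    (fun n a b => mt mem_st_st_st_singleton_comm.1) hX
  exact hH (hs.countable_of_pairwise_notMem_st_st_st (h𝒰 n) hpair)

theorem stmt8 (X : Type u) [TopologicalSpace X] [T2Space X]
    (hs : StarCDC X) (hd : HasRank3Diagonal X) :
    #X ≤ 2 ^ ℵ₀ :=
  stmt8_general X hs hd
end

section
/- If X is a normal star-cdc Hausdorff space with a G_δ-diagonal of rank 2, then |X| ≤ 2^ℵ₀. -/
open Cardinal Set

universe u

/-!
Distinct points have disjoint stars at some level of the rank-2 sequence `(𝒰 n)`. If a cdc
subspace `Y` had more than `𝔠` points, the countable Erdős–Rado theorem `𝔠⁺ → (ω₁)²_ω` would give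
an uncountable `A ⊆ Y` and one level `n` at which the stars `St(a, 𝒰 n)`, `a ∈ A`, are pairwise
disjoint. Then `A` is closed discrete, normality shrinks these stars to a discrete family of open
sets, and their traces on `Y` contradict cdc. So the cdc sets `Y n` with `St(Y n, 𝒰 n) = X` have
at most `𝔠` points, and `x ↦ (yₙ)ₙ` with `yₙ ∈ Y n ∩ St(x, 𝒰 n)` is injective because the diagonal
has rank 2, whence `|X| ≤ 𝔠 ^ ℵ₀ = 𝔠`.
-/

theorem mk_pi_nat_le_continuum {Y : ℕ → Type u} (h : ∀ n, #(Y n) ≤ 𝔠) : #(∀ n, Y n) ≤ 𝔠 := by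
  rw [mk_pi]
  calc _ ≤ prod fun _ : ℕ => 𝔠 := prod_le_prod _ _ h
    _ = 𝔠 := by simp [prod_const, continuum_power_aleph0]

abbrev Omega1 : Type u := (ℵ₁ : Cardinal.{u}).ord.ToType

namespace Omega1

instance : Uncountable Omega1.{u} := by
  rw [← aleph0_lt_mk_iff, mk_toType, card_ord]
  exact aleph0_lt_aleph_one

theorem countable_Iio (w : Omega1.{u}) : (Iio w).Countable := by
  rw [← le_aleph0_iff_set_countable, ← lt_aleph_one_iff]
  simpa using mk_Iio_lt w

theorem mk_le_continuum : #Omega1.{u} ≤ 𝔠 := by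
  rw [mk_toType, card_ord]
  exact aleph_one_le_continuum

theorem exists_gt_of_countable {s : Set Omega1.{u}} (hs : s.Countable) : ∃ w, ∀ v ∈ s, v < w := by
  by_contra! h
  have hcover : (univ : Set Omega1.{u}) ⊆ ⋃ v ∈ s, Iic v := fun w _ =>
    let ⟨v, hv, hwv⟩ := h w; mem_biUnion hv hwv
  refine not_countable_univ ((hs.biUnion fun v _ => ?_).mono hcover)
  rw [← Iio_insert]
  exact (countable_Iio v).insert v

end Omega1

section CountableClosure

variable {α : Type u}

theorem mk_biUnion_countable_subsets_le {B : Set α} (hB : #B ≤ 𝔠) (F : Set α → Set α)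
    (hF : ∀ D, D.Countable → #(F D) ≤ 𝔠) :
    #(⋃ D ∈ {D | D ⊆ B ∧ D.Countable}, F D) ≤ 𝔠 := by
  have hsubsets : #{D | D ⊆ B ∧ D.Countable} ≤ 𝔠 := by
    simp_rw [← le_aleph0_iff_set_countable]
    calc _ ≤ max #B ℵ₀ ^ ℵ₀ := mk_bounded_subset_le B ℵ₀
      _ ≤ 𝔠 ^ ℵ₀ := power_le_power_right (max_le hB aleph0_le_continuum)
      _ = 𝔠 := continuum_power_aleph0
  calc _ ≤ _ := mk_biUnion_le _ _
    _ ≤ 𝔠 * 𝔠 := mul_le_mul' hsubsets (ciSup_le' fun D => hF D.1 D.2.2)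
    _ = 𝔠 := continuum_mul_self

theorem exists_countablyClosed_mk_le_continuum (F : Set α → Set α)
    (hF : ∀ D, D.Countable → #(F D) ≤ 𝔠) :
    ∃ M : Set α, #M ≤ 𝔠 ∧ ∀ D ⊆ M, D.Countable → F D ⊆ M := by
  let stage : Omega1.{u} → Set α := WellFoundedLT.fix fun w stage =>
    ⋃ D ∈ {D | D ⊆ ⋃ v, ⋃ h : v < w, stage v h ∧ D.Countable}, F D
  have stage_eq (w) : stage w = ⋃ D ∈ {D | D ⊆ ⋃ v ∈ Iio w, stage v ∧ D.Countable}, F D :=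
    WellFoundedLT.fix_eq _ w
  have mk_stage (w) : #(stage w) ≤ 𝔠 := by
    induction w using WellFoundedLT.induction with
    | _ w ih =>
      rw [stage_eq]
      refine mk_biUnion_countable_subsets_le ((mk_biUnion_le stage (Iio w)).trans ?_) F hF
      calc #(Iio w) * ⨆ v : Iio w, #(stage v) ≤ ℵ₀ * 𝔠 :=
            mul_le_mul' (le_aleph0_iff_set_countable.2 (Omega1.countable_Iio w))
              (ciSup_le' fun v => ih v v.2)
        _ = 𝔠 := aleph0_mul_continuum
  refine ⟨⋃ w, stage w, ?_, fun D hD hDc => ?_⟩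
  · calc _ ≤ _ := mk_iUnion_le _
      _ ≤ 𝔠 * 𝔠 := mul_le_mul' Omega1.mk_le_continuum (ciSup_le' mk_stage)
      _ = 𝔠 := continuum_mul_self
  · have := hDc.to_subtype
    choose g hg using fun d : D => mem_iUnion.1 (hD d.2)
    obtain ⟨w, hw⟩ := Omega1.exists_gt_of_countable (countable_range g)
    have hDw : D ⊆ ⋃ v ∈ Iio w, stage v := fun d hd =>
      mem_biUnion (hw _ (mem_range_self ⟨d, hd⟩)) (hg ⟨d, hd⟩)
    refine subset_iUnion_of_subset w ?_
    rw [stage_eq]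
    exact subset_biUnion_of_mem (u := F) ⟨hDw, hDc⟩

end CountableClosure

section ErdosRado

variable {α : Type u}

theorem exists_endHomogeneous_of_continuum_lt (hα : 𝔠 < #α) (c : α → α → ℕ) :
    ∃ (a : α) (f : Omega1.{u} → α), Function.Injective f ∧
      ∀ v w, v < w → c (f v) (f w) = c (f v) a := by
  have : Nonempty α := mk_ne_zero_iff.1 (ne_bot_of_gt hα)
  let extend (D : Set α) (h : D → ℕ) : α :=
    Classical.epsilon fun x => x ∉ D ∧ ∀ d : D, c d x = h d
  have mk_range_extend (D : Set α) (hD : D.Countable) : #(range (extend D)) ≤ 𝔠 := by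
    have := hD.to_subtype
    calc _ ≤ #(D → ℕ) := mk_range_le
      _ ≤ ℵ₀ ^ ℵ₀ := by simpa [mk_arrow] using power_le_power_left aleph0_ne_zero mk_le_aleph0
      _ = 𝔠 := aleph0_power_aleph0
  obtain ⟨M, hMcard, hM⟩ := exists_countablyClosed_mk_le_continuum _ mk_range_extend
  -- A colour pattern over a countable subset of `M` that is realised at all is realised in `M`,
  -- so imitating a point `a ∉ M` over longer and longer initial segments never gets stuck.
  obtain ⟨a, haM⟩ : ∃ a, a ∉ M := by
    by_contra! h
    rw [eq_univ_of_forall h, mk_univ] at hMcard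
    exact hMcard.not_gt hα
  let f : Omega1.{u} → α :=
    WellFoundedLT.fix fun w f => extend (range fun v : Iio w => f v v.2) fun d => c d a
  let D (w : Omega1.{u}) : Set α := range fun v : Iio w => f v
  have f_eq (w) : f w = extend (D w) fun d => c d a := WellFoundedLT.fix_eq _ w
  have hstep (w) (hw : D w ⊆ M) :
      f w ∈ M ∧ f w ∉ D w ∧ ∀ v < w, c (f v) (f w) = c (f v) a := by
    have hD : (D w).Countable := have := (Omega1.countable_Iio w).to_subtype; countable_range _
    obtain ⟨hnew, hcol⟩ : f w ∉ D w ∧ ∀ d : D w, c d (f w) = c d a := by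
      rw [f_eq]
      exact Classical.epsilon_spec (p := fun x => x ∉ D w ∧ ∀ d : D w, c d x = c d a)
        ⟨a, fun ha => haM (hw ha), fun _ => rfl⟩
    refine ⟨hM _ hw hD ?_, hnew, fun v hv => hcol ⟨f v, mem_range_self (⟨v, hv⟩ : Iio w)⟩⟩
    rw [f_eq]
    exact mem_range_self _
  have hfM (w) : f w ∈ M := by
    induction w using WellFoundedLT.induction with
    | _ w ih => exact (hstep w (range_subset_iff.2 fun v => ih v v.2)).1
  have hf (w) := hstep w (range_subset_iff.2 fun v => hfM v)
  refine ⟨a, f, ?_, fun v w hvw => (hf w).2.2 v hvw⟩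
  intro v w hvw
  by_contra hne
  rcases lt_or_gt_of_ne hne with h | h
  · exact (hf w).2.1 ⟨⟨v, h⟩, hvw⟩
  · exact (hf v).2.1 ⟨⟨w, h⟩, hvw.symm⟩

theorem exists_uncountable_monochromatic (hα : 𝔠 < #α) (c : α → α → ℕ) :
    ∃ A : Set α, ¬A.Countable ∧ ∃ n, A.Pairwise fun x y => c x y = n ∨ c y x = n := by
  obtain ⟨a, f, hf, hc⟩ := exists_endHomogeneous_of_continuum_lt hα c
  obtain ⟨n, hn⟩ : ∃ n, ¬((fun w => c (f w) a) ⁻¹' {n}).Countable := by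
    by_contra! h
    exact not_countable (Countable.of_preimage_singleton h)
  refine ⟨f '' _, fun hA => hn (countable_of_injective_of_countable_image hf.injOn hA), n, ?_⟩
  rintro _ ⟨v, hv, rfl⟩ _ ⟨w, hw, rfl⟩ hvw
  rcases lt_or_gt_of_ne (ne_of_apply_ne f hvw) with h | h
  · exact .inl ((hc v w h).trans hv)
  · exact .inr ((hc w v h).trans hw)

end ErdosRado

section Star

variable {X : Type u} {𝒰 : Set (Set X)} {U : Set X} {x y : X}

theorem isOpen_st [TopologicalSpace X] (h𝒰 : ∀ U ∈ 𝒰, IsOpen U) (A : Set X) :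
    IsOpen (st X A 𝒰) :=
  isOpen_sUnion fun U hU => h𝒰 U hU.1

theorem subset_st_singleton (hU : U ∈ 𝒰) (hx : x ∈ U) : U ⊆ st X {x} 𝒰 :=
  fun _ hy => ⟨U, ⟨hU, x, rfl, hx⟩, hy⟩

theorem mem_st_singleton_self (h𝒰 : ⋃₀ 𝒰 = Set.univ) (x : X) : x ∈ st X {x} 𝒰 :=
  let ⟨_, hU, hx⟩ := mem_sUnion.1 (h𝒰 ▸ mem_univ x)
  subset_st_singleton hU hx hx

theorem mem_st_st_of_inter_nonempty (h : (st X {x} 𝒰 ∩ st X {y} 𝒰).Nonempty) :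
    y ∈ st X (st X {x} 𝒰) 𝒰 := by
  obtain ⟨z, hzx, U, ⟨hU, _, rfl, hyU⟩, hzU⟩ := h
  exact ⟨U, ⟨hU, z, hzx, hzU⟩, hyU⟩

theorem exists_mem_st_singleton_of_mem_st {A : Set X} (hx : x ∈ st X A 𝒰) :
    ∃ a ∈ A, a ∈ st X {x} 𝒰 :=
  let ⟨_, ⟨hU, a, haA, haU⟩, hxU⟩ := hx
  ⟨a, haA, subset_st_singleton hU hxU haU⟩

theorem isClosed_of_pairwiseDisjoint_st [TopologicalSpace X] [T1Space X] (h𝒰 : IsOpenCover X 𝒰)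
    {S : Set X} (hS : S.PairwiseDisjoint fun x => st X {x} 𝒰) : IsClosed S := by
  rw [← iUnion_of_singleton_coe S]
  refine LocallyFinite.isClosed_iUnion (fun z => ?_) fun _ => isClosed_singleton
  obtain ⟨U, hU, hzU⟩ := mem_sUnion.1 (h𝒰.2 ▸ mem_univ z)
  refine ⟨U, (h𝒰.1 U hU).mem_nhds hzU, Subsingleton.finite ?_⟩
  rintro s ⟨_, rfl, hsU⟩ t ⟨_, rfl, htU⟩
  exact Subtype.ext <| hS.elim s.2 t.2 <| not_disjoint_iff_nonempty_inter.2
    ⟨z, subset_st_singleton hU hsU hzU, subset_st_singleton hU htU hzU⟩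

theorem eq_of_forall_st_inter_nonempty {𝒰 : ℕ → Set (Set X)}
    (hrank : ∀ x : X, (⋂ n, st X (st X {x} (𝒰 n)) (𝒰 n)) = {x})
    (h : ∀ n, (st X {x} (𝒰 n) ∩ st X {y} (𝒰 n)).Nonempty) : y = x := by
  have hy : y ∈ ⋂ n, st X (st X {x} (𝒰 n)) (𝒰 n) :=
    mem_iInter.2 fun n => mem_st_st_of_inter_nonempty (h n)
  rwa [hrank x] at hy

end Star

section Discrete

variable {X : Type u} [TopologicalSpace X]

theorem IsDiscreteFamily.preimage {Z : Type u} [TopologicalSpace Z] {f : Z → X}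
    (hf : Continuous f) {𝒱 : Set (Set X)} (h : IsDiscreteFamily X 𝒱) :
    IsDiscreteFamily Z (preimage f '' 𝒱) := by
  intro z
  obtain ⟨V, hV, hzV, hsub⟩ := h (f z)
  refine ⟨f ⁻¹' V, hV.preimage hf, hzV, ?_⟩
  rintro _ ⟨⟨U, hU, rfl⟩, p, hpV, hpU⟩ _ ⟨⟨U', hU', rfl⟩, q, hqV, hqU'⟩
  rw [hsub ⟨hU, f p, hpV, hpU⟩ ⟨hU', f q, hqV, hqU'⟩]

theorem exists_isDiscreteFamily_inter [NormalSpace X] {S : Set X} (hS : IsClosed S)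
    {V : X → Set X} (hV : ∀ s ∈ S, IsOpen (V s)) (hsV : ∀ s ∈ S, s ∈ V s)
    (hdisj : S.PairwiseDisjoint V) :
    ∃ G, IsOpen G ∧ S ⊆ G ∧ IsDiscreteFamily X ((fun s => V s ∩ G) '' S) := by
  obtain ⟨G, hG, hSG, hGV⟩ := normal_exists_closure_subset hS (isOpen_biUnion hV)
    fun s hs => mem_biUnion hs (hsV s hs)
  refine ⟨G, hG, hSG, fun z => ?_⟩
  by_cases hz : z ∈ closure G
  · obtain ⟨b, hb, hzb⟩ := mem_iUnion₂.1 (hGV hz)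
    refine ⟨V b, hV b hb, hzb, (subsingleton_singleton (a := V b ∩ G)).anti ?_⟩
    rintro _ ⟨⟨s, hs, rfl⟩, p, hpb, hps, -⟩
    rw [hdisj.elim hs hb (not_disjoint_iff_nonempty_inter.2 ⟨p, hps, hpb⟩)]
    rfl
  · refine ⟨(closure G)ᶜ, isClosed_closure.isOpen_compl, hz, ?_⟩
    rintro _ ⟨⟨s, -, rfl⟩, p, hp, -, hpG⟩
    exact absurd (subset_closure hpG) hp

theorem CDC.countable_of_isClosed [NormalSpace X] {Y : Set X} (hY : CDC Y) {S : Set X}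
    (hSY : S ⊆ Y) (hS : IsClosed S) {V : X → Set X} (hV : ∀ s ∈ S, IsOpen (V s))
    (hsV : ∀ s ∈ S, s ∈ V s) (hdisj : S.PairwiseDisjoint V) : S.Countable := by
  obtain ⟨G, hG, hSG, hdisc⟩ := exists_isDiscreteFamily_inter hS hV hsV hdisj
  let W (s : X) : Set Y := Subtype.val ⁻¹' (V s ∩ G)
  have hW : (W '' S).Countable := by
    refine hY _ ?_ <|
      image_image (preimage Subtype.val) _ S ▸ hdisc.preimage continuous_subtype_val
    rintro _ ⟨s, hs, rfl⟩
    exact ⟨((hV s hs).inter hG).preimage continuous_subtype_val, ⟨s, hSY hs⟩, hsV s hs, hSG hs⟩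
  refine countable_of_injective_of_countable_image (fun s hs t ht hst => ?_) hW
  have hst' : (⟨s, hSY hs⟩ : Y) ∈ W t := hst ▸ ⟨hsV s hs, hSG hs⟩
  exact hdisj.elim hs ht (not_disjoint_iff_nonempty_inter.2 ⟨s, hsV s hs, hst'.1⟩)

end Discrete

section Rank2Diagonal

variable {X : Type u} [TopologicalSpace X] {𝒰 : ℕ → Set (Set X)}

theorem mk_le_continuum_of_cdc [T1Space X] [NormalSpace X] (hcov : ∀ n, IsOpenCover X (𝒰 n))
    (hrank : ∀ x : X, (⋂ n, st X (st X {x} (𝒰 n)) (𝒰 n)) = {x}) {Y : Set X} (hY : CDC Y) :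
    #Y ≤ 𝔠 := by
  by_contra! hlt
  have hsep (a b : Y) : ∃ n, a ≠ b → Disjoint (st X {a.1} (𝒰 n)) (st X {b.1} (𝒰 n)) := by
    by_contra! h
    exact (h 0).1 <| Subtype.ext <| Eq.symm <| eq_of_forall_st_inter_nonempty hrank fun n =>
      not_disjoint_iff_nonempty_inter.1 (h n).2
  choose c hc using hsep
  obtain ⟨A, hA, n, hAn⟩ := exists_uncountable_monochromatic hlt c
  have hdisj : (Subtype.val '' A).PairwiseDisjoint fun x => st X {x} (𝒰 n) := by
    rintro _ ⟨a, ha, rfl⟩ _ ⟨b, hb, rfl⟩ hab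
    have hab' : a ≠ b := ne_of_apply_ne _ hab
    rcases hAn ha hb hab' with h | h
    · exact h ▸ hc a b hab'
    · exact (h ▸ hc b a hab'.symm).symm
  refine hA (countable_of_injective_of_countable_image Subtype.val_injective.injOn ?_)
  exact hY.countable_of_isClosed (image_subset_iff.2 fun a _ => a.2)
    (isClosed_of_pairwiseDisjoint_st (hcov n) hdisj) (fun _ _ => isOpen_st (hcov n).1 _)
    (fun x _ => mem_st_singleton_self (hcov n).2 x) hdisj

end Rank2Diagonal

theorem stmt9 (X : Type u) [TopologicalSpace X] [T2Space X] [NormalSpace X]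
    (hs : StarCDC X) (hd : HasRank2Diagonal X) :
    #X ≤ 2 ^ ℵ₀ := by
  obtain ⟨𝒰, hcov, hrank⟩ := hd
  choose Y hY hstY using fun n => hs (𝒰 n) (hcov n)
  have hpick (x : X) (n : ℕ) : ∃ y : Y n, (y : X) ∈ st X {x} (𝒰 n) :=
    let ⟨y, hyY, hyx⟩ := exists_mem_st_singleton_of_mem_st ((hstY n).symm ▸ mem_univ x)
    ⟨⟨y, hyY⟩, hyx⟩
  choose φ hφ using hpick
  have hφinj : Function.Injective φ := fun x x' h =>
    (eq_of_forall_st_inter_nonempty hrank fun n => ⟨φ x n, hφ x n, h ▸ hφ x' n⟩).symm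
  calc #X ≤ #(∀ n, Y n) := mk_le_of_injective hφinj
    _ ≤ 𝔠 := mk_pi_nat_le_continuum fun n => mk_le_continuum_of_cdc hcov hrank (hY n)
    _ = 2 ^ ℵ₀ := two_power_aleph0.symm
end
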